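/- arXiv:2410.23174 — 2 statements merged into one kernel-verified Lean document; each statement's English description precedes it below -/
import Mathlib

section
/- Let P^{(K)} be the multiproposal kernel built from Q and h, and assume P^{(K)} is π-reversible. Then Gap(P^{(K)}) ≤ K · Gap(P̃), where P̃ is the Metropolis–Hastings kernel with target π and proposal density q̃(x,y) = K⁻¹ ∑_{i=1}^K q_i(x,y). -/
open MeasureTheory ProbabilityTheory ENNReal

noncomputable section

/-- A Markov kernel `P` is `π`-reversible: the measure `π(dx) P(x,dy)` on `X × X`
is symmetric under swapping the two coordinates. -/
def Reversible {X : Type*} [MeasurableSpace X] (π : Measure X) (P : Kernel X X) : Prop :=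
  (π.compProd P).map Prod.swap = π.compProd P

/-- `P` agrees off the diagonal with the multiproposal kernel built from the joint
proposal kernel `Q` and the selection probabilities `h`:
`P(x, A) = ∑_{i=1}^K ∫ 1_A(y_i) h_i(x, y_{1:K}) Q(x, dy_{1:K})` for `x ∉ A`. -/
def IsMultiproposal {X : Type*} [MeasurableSpace X] (K : ℕ) (Q : Kernel X (Fin K → X))
    (h : X → (Fin K → X) → Fin K → ℝ≥0∞) (P : Kernel X X) : Prop :=
  ∀ (x : X) (A : Set X), MeasurableSet A → x ∉ A →
    P x A = ∑ i : Fin K, ∫⁻ y, A.indicator (fun _ => h x y i) (y i) ∂(Q x)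

/-- `Pt` agrees off the diagonal with the Metropolis–Hastings kernel with target density
`πd` and proposal density `qt`, both with respect to `μ`:
`Pt(x, A) = ∫_A min(1, πd(y)qt(y,x)/(πd(x)qt(x,y))) qt(x,y) μ(dy)` for `x ∉ A`,
the ratio being interpreted as `0` when its denominator vanishes. -/
def IsMHKernel {X : Type*} [MeasurableSpace X] (μ : Measure X) (πd : X → ℝ≥0∞)
    (qt : X → X → ℝ≥0∞) (Pt : Kernel X X) : Prop :=
  ∀ (x : X) (A : Set X), MeasurableSet A → x ∉ A →
    Pt x A = ∫⁻ y in A,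
      (if πd x * qt x y = 0 then 0 else min 1 (πd y * qt y x / (πd x * qt x y)))
        * qt x y ∂μ


/-- `Var_π(f) = ∫ f² dπ − (∫ f dπ)²`. -/
def piVar {X : Type*} [MeasurableSpace X] (π : Measure X) (f : X → ℝ) : ℝ :=
  ∫ x, f x ^ 2 ∂π - (∫ x, f x ∂π) ^ 2

/-- The spectral gap of a `π`-reversible kernel `P`:
`Gap(P) = inf_f [∫ (f(y) − f(x))² π(dx)P(x,dy)] / (2 Var_π(f))`,
the infimum running over all `f ∈ L²(π)` with `0 < Var_π(f) < ∞`. -/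
def gap {X : Type*} [MeasurableSpace X] (π : Measure X) (P : Kernel X X) : ℝ≥0∞ :=
  ⨅ (f : X → ℝ) (_ : MemLp f 2 π) (_ : 0 < piVar π f),
    (∫⁻ p, ENNReal.ofReal ((f p.2 - f p.1) ^ 2) ∂(π.compProd P))
      / (2 * ENNReal.ofReal (piVar π f))

private lemma mul_min_ennreal (a b c : ℝ≥0∞) : a * min b c = min (a * b) (a * c) := by
  rcases le_total b c with h | h
  · rw [min_eq_left h, min_eq_left (mul_le_mul_right h a)]
  · rw [min_eq_right h, min_eq_right (mul_le_mul_right h a)]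

/-- if the multiproposal kernel `P = P^{(K)}` is `π`-reversible, then
`Gap(P^{(K)}) ≤ K · Gap(P̃)`, where `P̃` is the Metropolis–Hastings kernel with target `π`
and proposal density `q̃(x,y) = K⁻¹ ∑_{i=1}^K q_i(x,y)`. -/
theorem multiproposal_gap_le
    {X : Type*} [MeasurableSpace X] (π μ : Measure X)
    [IsProbabilityMeasure π] [SigmaFinite μ]
    (K : ℕ) (hK : 1 ≤ K)
    (Q : Kernel X (Fin K → X)) [IsMarkovKernel Q]
    (h : X → (Fin K → X) → Fin K → ℝ≥0∞)
    (hmeas : ∀ i : Fin K, Measurable fun p : X × (Fin K → X) => h p.1 p.2 i)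
    (hsum : ∀ (x : X) (y : Fin K → X), ∑ i : Fin K, h x y i ≤ 1)
    (P : Kernel X X) [IsMarkovKernel P]
    (hP : IsMultiproposal K Q h P)
    (hrev : Reversible π P)
    -- densities with respect to μ
    (πd : X → ℝ≥0∞) (hπd : Measurable πd) (hπ : π = μ.withDensity πd)
    (qi : Fin K → X → X → ℝ≥0∞)
    (hqimeas : ∀ i : Fin K, Measurable fun p : X × X => qi i p.1 p.2)
    (hqi : ∀ (i : Fin K) (x : X), (Q x).map (fun y => y i) = μ.withDensity (qi i x))
    -- the Metropolis–Hastings kernel with proposal density q̃ = K⁻¹ ∑ᵢ qᵢ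
    (Pt : Kernel X X) [IsMarkovKernel Pt]
    (hPt : IsMHKernel μ πd (fun x y => (K : ℝ≥0∞)⁻¹ * ∑ i : Fin K, qi i x y) Pt) :
    gap π P ≤ (K : ℝ≥0∞) * gap π Pt := by
  classical
  have hK0 : (K : ℝ≥0∞) ≠ 0 := Nat.cast_ne_zero.mpr (by omega)
  have hKtop : (K : ℝ≥0∞) ≠ ⊤ := ENNReal.natCast_ne_top K
  set qt : X → X → ℝ≥0∞ := fun x y => (K : ℝ≥0∞)⁻¹ * ∑ i : Fin K, qi i x y with hqt_def
  have hqtm : Measurable fun p : X × X => qt p.1 p.2 := by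
    exact measurable_const.mul (Finset.measurable_sum _ fun i _ => hqimeas i)
  set c₁ : X × X → ℝ≥0∞ := fun p => πd p.1 * ∑ i : Fin K, qi i p.1 p.2 with hc₁_def
  set c₂ : X × X → ℝ≥0∞ := fun p => c₁ p.swap with hc₂_def
  set cm : X × X → ℝ≥0∞ := fun p => min (c₁ p) (c₂ p) with hcm_def
  have hc₁m : Measurable c₁ :=
    (hπd.comp measurable_fst).mul (Finset.measurable_sum _ fun i _ => hqimeas i)
  have hc₂m : Measurable c₂ := hc₁m.comp measurable_swap
  have hcmm : Measurable cm := hc₁m.min hc₂m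
  -- MH density
  set bb : X × X → ℝ≥0∞ := fun p =>
    (if πd p.1 * qt p.1 p.2 = 0 then 0
      else min 1 (πd p.2 * qt p.2 p.1 / (πd p.1 * qt p.1 p.2))) * qt p.1 p.2 with hbb_def
  have hum : Measurable fun p : X × X => πd p.1 * qt p.1 p.2 := (hπd.comp measurable_fst).mul hqtm
  have hvm : Measurable fun p : X × X => πd p.2 * qt p.2 p.1 :=
    ((hπd.comp measurable_fst).mul hqtm).comp measurable_swap
  have hbbm : Measurable bb := by
    refine Measurable.mul ?_ ((measurable_const.mul (Finset.measurable_sum _ fun i _ => hqimeas i)))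
    exact Measurable.ite (hum (measurableSet_singleton 0)) measurable_const
      (measurable_const.min (hvm.div hum))
  -- core inequality for measurable f
  have core : ∀ f : X → ℝ, Measurable f →
      (∫⁻ p, ENNReal.ofReal ((f p.2 - f p.1) ^ 2) ∂(π.compProd P))
        ≤ (K : ℝ≥0∞) * ∫⁻ p, ENNReal.ofReal ((f p.2 - f p.1) ^ 2) ∂(π.compProd Pt) := by
    intro f hf
    set g : X × X → ℝ≥0∞ := fun p => ENNReal.ofReal ((f p.2 - f p.1) ^ 2) with hg_def
    have hgm : Measurable g :=
      (measurable_ofReal.comp (((hf.comp measurable_snd).sub (hf.comp measurable_fst)).pow_const 2))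
    set S : Set (X × X) := {p | f p.1 = f p.2}ᶜ with hS_def
    have hSm : MeasurableSet S :=
      (measurableSet_eq_fun (hf.comp measurable_fst) (hf.comp measurable_snd)).compl
    have hgS : ∀ p ∉ S, g p = 0 := by
      intro p hp
      simp only [hS_def, Set.mem_compl_iff, Set.mem_setOf_eq, not_not] at hp
      simp [hg_def, hp]
    have hiqm : ∀ (i : Fin K) (x : X), Measurable fun y => qi i x y :=
      fun i x => (hqimeas i).comp measurable_prodMk_left
    have hSigm : Measurable fun p : X × X => ∑ i : Fin K, qi i p.1 p.2 :=
      Finset.measurable_sum _ fun i _ => hqimeas i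
    -- Claim A
    have claimA : ∀ E : Set (X × X), MeasurableSet E → E ⊆ S →
        (π.compProd P) E ≤ ((μ.prod μ).withDensity c₁) E := by
      intro E hE hES
      have key : ∀ x, P x (Prod.mk x ⁻¹' E)
          ≤ ∫⁻ y, E.indicator (fun p => ∑ i : Fin K, qi i p.1 p.2) (x, y) ∂μ := by
        intro x
        have hEx : MeasurableSet (Prod.mk x ⁻¹' E) := measurable_prodMk_left hE
        have hxE : x ∉ Prod.mk x ⁻¹' E := fun hx => (hES hx) rfl
        rw [hP x _ hEx hxE]
        have step_i : ∀ i : Fin K,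
            (∫⁻ y, (Prod.mk x ⁻¹' E).indicator (fun _ => h x y i) (y i) ∂Q x)
              ≤ ∫⁻ y in Prod.mk x ⁻¹' E, qi i x y ∂μ := by
          intro i
          calc ∫⁻ y, (Prod.mk x ⁻¹' E).indicator (fun _ => h x y i) (y i) ∂Q x
              ≤ ∫⁻ y, (Prod.mk x ⁻¹' E).indicator 1 (y i) ∂Q x := by
                refine lintegral_mono fun y => ?_
                by_cases hy : y i ∈ Prod.mk x ⁻¹' E
                · simpa [Set.indicator_of_mem hy] using
                    le_trans (Finset.single_le_sum (f := fun j => h x y j)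
                      (fun j _ => zero_le) (Finset.mem_univ i)) (hsum x y)
                · simp [Set.indicator_of_notMem hy]
            _ = ∫⁻ z, (Prod.mk x ⁻¹' E).indicator 1 z ∂((Q x).map (fun y => y i)) := by
                rw [lintegral_map (measurable_one.indicator hEx) (measurable_pi_apply i)]
            _ = ∫⁻ y in Prod.mk x ⁻¹' E, qi i x y ∂μ := by
                rw [lintegral_indicator_one hEx, hqi i x, withDensity_apply _ hEx]
        calc (∑ i : Fin K, ∫⁻ y, (Prod.mk x ⁻¹' E).indicator (fun _ => h x y i) (y i) ∂Q x)
            ≤ ∑ i : Fin K, ∫⁻ y in Prod.mk x ⁻¹' E, qi i x y ∂μ :=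
              Finset.sum_le_sum fun i _ => step_i i
          _ = ∫⁻ y in Prod.mk x ⁻¹' E, ∑ i : Fin K, qi i x y ∂μ :=
              (lintegral_finset_sum _ fun i _ => hiqm i x).symm
          _ = ∫⁻ y, (Prod.mk x ⁻¹' E).indicator (fun y => ∑ i : Fin K, qi i x y) y ∂μ :=
              (lintegral_indicator hEx _).symm
          _ = ∫⁻ y, E.indicator (fun p => ∑ i : Fin K, qi i p.1 p.2) (x, y) ∂μ := by
              refine lintegral_congr fun y => ?_
              by_cases hy : (x, y) ∈ E <;> simp [Set.indicator, hy]
      rw [Measure.compProd_apply hE, withDensity_apply _ hE]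
      calc ∫⁻ x, P x (Prod.mk x ⁻¹' E) ∂π
          ≤ ∫⁻ x, ∫⁻ y, E.indicator (fun p => ∑ i : Fin K, qi i p.1 p.2) (x, y) ∂μ ∂π :=
            lintegral_mono key
        _ = ∫⁻ x, πd x * ∫⁻ y, E.indicator (fun p => ∑ i : Fin K, qi i p.1 p.2) (x, y) ∂μ ∂μ := by
            rw [hπ, lintegral_withDensity_eq_lintegral_mul _ hπd
              (hSigm.indicator hE).lintegral_prod_right']
            rfl
        _ = ∫⁻ x, ∫⁻ y, E.indicator c₁ (x, y) ∂μ ∂μ := by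
            refine lintegral_congr fun x => ?_
            have hm : Measurable fun y => E.indicator (fun p => ∑ i : Fin K, qi i p.1 p.2) (x, y) :=
              (hSigm.indicator hE).comp measurable_prodMk_left
            rw [← lintegral_const_mul _ hm]
            refine lintegral_congr fun y => ?_
            by_cases hy : (x, y) ∈ E <;> simp [Set.indicator, hy, hc₁_def]
        _ = ∫⁻ p, E.indicator c₁ p ∂(μ.prod μ) :=
            (lintegral_prod _ (hc₁m.indicator hE).aemeasurable).symm
        _ = ∫⁻ p in E, c₁ p ∂(μ.prod μ) := lintegral_indicator hE _
    -- Claim B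
    have claimB : ∀ E : Set (X × X), MeasurableSet E → E ⊆ S →
        (π.compProd P) E ≤ ((μ.prod μ).withDensity c₂) E := by
      intro E hE hES
      have hE' : MeasurableSet (Prod.swap ⁻¹' E : Set (X × X)) := measurable_swap hE
      have hES' : (Prod.swap ⁻¹' E : Set (X × X)) ⊆ S := by
        intro p hp
        have h2 := hES hp
        simp only [hS_def, Set.mem_compl_iff, Set.mem_setOf_eq] at h2 ⊢
        exact fun hfe => h2 hfe.symm
      have h1 : (π.compProd P) E = (π.compProd P) (Prod.swap ⁻¹' E) := by
        conv_lhs => rw [← hrev]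
        rw [Measure.map_apply measurable_swap hE]
      rw [h1]
      refine le_trans (claimA _ hE' hES') (le_of_eq ?_)
      rw [withDensity_apply _ hE', withDensity_apply _ hE,
          ← lintegral_indicator hE', ← lintegral_indicator hE]
      have hpt : ∀ p : X × X, (Prod.swap ⁻¹' E).indicator c₁ p = E.indicator c₂ (Prod.swap p) := by
        intro p
        by_cases hp : p.swap ∈ E
        · have hp' : p ∈ Prod.swap ⁻¹' E := hp
          rw [Set.indicator_of_mem hp', Set.indicator_of_mem hp]
          simp [hc₂_def]
        · have hp' : p ∉ Prod.swap ⁻¹' E := hp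
          rw [Set.indicator_of_notMem hp', Set.indicator_of_notMem hp]
      calc ∫⁻ p, (Prod.swap ⁻¹' E).indicator c₁ p ∂(μ.prod μ)
          = ∫⁻ p, E.indicator c₂ (Prod.swap p) ∂(μ.prod μ) := lintegral_congr hpt
        _ = ∫⁻ p, E.indicator c₂ p ∂((μ.prod μ).map Prod.swap) :=
            (lintegral_map (hc₂m.indicator hE) measurable_swap).symm
        _ = ∫⁻ p, E.indicator c₂ p ∂(μ.prod μ) := by rw [Measure.prod_swap]
    -- Claim C
    have claimC : ∀ E : Set (X × X), MeasurableSet E → E ⊆ S →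
        (π.compProd P) E ≤ ((μ.prod μ).withDensity cm) E := by
      intro E hE hES
      set T : Set (X × X) := {p | c₁ p ≤ c₂ p} with hT_def
      have hT : MeasurableSet T := measurableSet_le hc₁m hc₂m
      have h1 : (π.compProd P) (E ∩ T) ≤ ((μ.prod μ).withDensity cm) (E ∩ T) := by
        refine le_trans (claimA _ (hE.inter hT) (fun p hp => hES hp.1)) (le_of_eq ?_)
        rw [withDensity_apply _ (hE.inter hT), withDensity_apply _ (hE.inter hT)]
        exact setLIntegral_congr_fun (hE.inter hT)
          (fun p hp => (min_eq_left hp.2).symm)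
      have h2 : (π.compProd P) (E \ T) ≤ ((μ.prod μ).withDensity cm) (E \ T) := by
        refine le_trans (claimB _ (hE.diff hT) (fun p hp => hES hp.1)) (le_of_eq ?_)
        rw [withDensity_apply _ (hE.diff hT), withDensity_apply _ (hE.diff hT)]
        refine setLIntegral_congr_fun (hE.diff hT) (fun p hp => ?_)
        exact (min_eq_right (le_of_not_ge hp.2)).symm
      calc (π.compProd P) E
          = (π.compProd P) (E ∩ T) + (π.compProd P) (E \ T) :=
            (measure_inter_add_diff E hT).symm
        _ ≤ ((μ.prod μ).withDensity cm) (E ∩ T) + ((μ.prod μ).withDensity cm) (E \ T) :=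
            add_le_add h1 h2
        _ = ((μ.prod μ).withDensity cm) E := measure_inter_add_diff E hT
    set G : X × X → ℝ≥0∞ := S.indicator (fun p => cm p * g p) with hG_def
    have hGm : Measurable G := (hcmm.mul hgm).indicator hSm
    set L : ℝ≥0∞ := ∫⁻ p, G p ∂(μ.prod μ) with hL_def
    have step1 : (∫⁻ p, g p ∂(π.compProd P)) ≤ L := by
      have hsplit : (∫⁻ p, g p ∂(π.compProd P))
          = ∫⁻ p, g p ∂((π.compProd P).restrict S)
            + ∫⁻ p, g p ∂((π.compProd P).restrict Sᶜ) := by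
        rw [← lintegral_add_measure, Measure.restrict_add_restrict_compl hSm]
      have hzero : ∫⁻ p, g p ∂((π.compProd P).restrict Sᶜ) = 0 := by
        have hc : ∫⁻ p in Sᶜ, g p ∂(π.compProd P) = ∫⁻ p in Sᶜ, 0 ∂(π.compProd P) :=
          setLIntegral_congr_fun hSm.compl (fun p hp => hgS p hp)
        rw [hc]; simp
      have hres : (π.compProd P).restrict S ≤ ((μ.prod μ).withDensity cm).restrict S := by
        refine Measure.le_iff.mpr fun A hA => ?_
        rw [Measure.restrict_apply hA, Measure.restrict_apply hA]
        exact claimC _ (hA.inter hSm) Set.inter_subset_right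
      rw [hsplit, hzero, add_zero]
      calc ∫⁻ p, g p ∂((π.compProd P).restrict S)
          ≤ ∫⁻ p, g p ∂(((μ.prod μ).withDensity cm).restrict S) := lintegral_mono' hres le_rfl
        _ = ∫⁻ p, g p ∂(((μ.prod μ).restrict S).withDensity cm) := by
            rw [restrict_withDensity hSm]
        _ = ∫⁻ p in S, cm p * g p ∂(μ.prod μ) :=
            lintegral_withDensity_eq_lintegral_mul _ hcmm hgm
        _ = L := by rw [hL_def, hG_def, lintegral_indicator hSm]
    have step2 : (K : ℝ≥0∞)⁻¹ * L ≤ ∫⁻ p, g p ∂(π.compProd Pt) := by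
      set F : X × X → ℝ≥0∞ := S.indicator (fun p => g p * bb p) with hF_def
      have hFm : Measurable F := (hgm.mul hbbm).indicator hSm
      have hπd_fin : ∀ᵐ x ∂μ, πd x < ⊤ := by
        refine ae_lt_top hπd ?_
        have huniv : ∫⁻ x, πd x ∂μ = π Set.univ := by
          rw [hπ, withDensity_apply _ MeasurableSet.univ, setLIntegral_univ]
        rw [huniv, measure_univ]; exact one_ne_top
      have hqt_int : ∀ x, ∫⁻ y, qt x y ∂μ = 1 := by
        intro x
        have hqi1 : ∀ i : Fin K, ∫⁻ y, qi i x y ∂μ = 1 := by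
          intro i
          have h1 : ∫⁻ y, qi i x y ∂μ = (μ.withDensity (qi i x)) Set.univ := by
            rw [withDensity_apply _ MeasurableSet.univ, setLIntegral_univ]
          rw [h1, ← hqi i x, Measure.map_apply (measurable_pi_apply i) MeasurableSet.univ]
          simp
        simp only [hqt_def]
        rw [lintegral_const_mul _ (Finset.measurable_sum _ fun i _ => hiqm i x),
            lintegral_finset_sum _ fun i _ => hiqm i x]
        simp only [hqi1, Finset.sum_const, Finset.card_univ, Fintype.card_fin,
          nsmul_eq_mul, mul_one]
        exact ENNReal.inv_mul_cancel hK0 hKtop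
      have hqt_fin : ∀ x, ∀ᵐ y ∂μ, qt x y < ⊤ := fun x =>
        ae_lt_top (hqtm.comp measurable_prodMk_left) (by rw [hqt_int x]; exact one_ne_top)
      -- pointwise comparison
      have hptwise : ∀ x, πd x ≠ ⊤ → ∀ y, qt x y ≠ ⊤ →
          (K : ℝ≥0∞)⁻¹ * G (x, y) ≤ πd x * F (x, y) := by
        intro x hx y hy
        by_cases hxy : (x, y) ∈ S
        · rw [hG_def, hF_def, Set.indicator_of_mem hxy, Set.indicator_of_mem hxy]
          refine le_of_eq ?_
          have hc1 : c₁ (x, y) = (K : ℝ≥0∞) * (πd x * qt x y) := by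
            simp only [hc₁_def, hqt_def]
            rw [← mul_assoc, mul_comm (K : ℝ≥0∞) (πd x), mul_assoc,
              ← mul_assoc (K : ℝ≥0∞), ENNReal.mul_inv_cancel hK0 hKtop, one_mul]
          have hc2 : c₂ (x, y) = (K : ℝ≥0∞) * (πd y * qt y x) := by
            simp only [hc₂_def, hc₁_def, hqt_def, Prod.swap]
            rw [← mul_assoc, mul_comm (K : ℝ≥0∞) (πd y), mul_assoc,
              ← mul_assoc (K : ℝ≥0∞), ENNReal.mul_inv_cancel hK0 hKtop, one_mul]
          have hcm' : (K : ℝ≥0∞)⁻¹ * cm (x, y) = min (πd x * qt x y) (πd y * qt y x) := by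
            simp only [hcm_def]
            rw [hc1, hc2, ← mul_min_ennreal, ← mul_assoc,
              ENNReal.inv_mul_cancel hK0 hKtop, one_mul]
          have hbb' : πd x * bb (x, y) = min (πd x * qt x y) (πd y * qt y x) := by
            by_cases hs0 : πd x * qt x y = 0
            · simp only [hbb_def, if_pos hs0]
              rw [zero_mul, mul_zero, hs0]
              exact (min_eq_left (zero_le)).symm
            · have hstop : πd x * qt x y ≠ ⊤ := ENNReal.mul_ne_top hx hy
              simp only [hbb_def, if_neg hs0]
              rw [mul_comm (min 1 (πd y * qt y x / (πd x * qt x y))) (qt x y), ← mul_assoc,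
                mul_min_ennreal, mul_one, mul_comm (πd x * qt x y) (πd y * qt y x / (πd x * qt x y)),
                ENNReal.div_mul_cancel hs0 hstop]
          calc (K : ℝ≥0∞)⁻¹ * (cm (x, y) * g (x, y))
              = ((K : ℝ≥0∞)⁻¹ * cm (x, y)) * g (x, y) := by rw [mul_assoc]
            _ = (πd x * bb (x, y)) * g (x, y) := by rw [hcm', hbb']
            _ = πd x * (g (x, y) * bb (x, y)) := by ring
        · rw [hG_def, hF_def, Set.indicator_of_notMem hxy, Set.indicator_of_notMem hxy]
          simp
      have hmain : ∀ᵐ x ∂μ, (K : ℝ≥0∞)⁻¹ * ∫⁻ y, G (x, y) ∂μ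
          ≤ πd x * ∫⁻ y, F (x, y) ∂μ := by
        filter_upwards [hπd_fin] with x hx
        have h1 : (K : ℝ≥0∞)⁻¹ * ∫⁻ y, G (x, y) ∂μ = ∫⁻ y, (K : ℝ≥0∞)⁻¹ * G (x, y) ∂μ :=
          (lintegral_const_mul _ (hGm.comp measurable_prodMk_left)).symm
        have h2 : πd x * ∫⁻ y, F (x, y) ∂μ = ∫⁻ y, πd x * F (x, y) ∂μ :=
          (lintegral_const_mul _ (hFm.comp measurable_prodMk_left)).symm
        rw [h1, h2]
        refine lintegral_mono_ae ?_
        filter_upwards [hqt_fin x] with y hy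
        exact hptwise x hx.ne y hy.ne
      have hinner : ∀ x, ∫⁻ y, F (x, y) ∂μ ≤ ∫⁻ y, g (x, y) ∂(Pt x) := by
        intro x
        have hSx : MeasurableSet (Prod.mk x ⁻¹' S) := measurable_prodMk_left hSm
        have hxS : x ∉ Prod.mk x ⁻¹' S := by simp [hS_def]
        have hbxm : Measurable fun y => bb (x, y) := hbbm.comp measurable_prodMk_left
        have hgxm : Measurable fun y => g (x, y) := hgm.comp measurable_prodMk_left
        have hmeq : (Pt x).restrict (Prod.mk x ⁻¹' S)
            = (μ.withDensity fun y => bb (x, y)).restrict (Prod.mk x ⁻¹' S) := by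
          ext A hA
          rw [Measure.restrict_apply hA, Measure.restrict_apply hA,
            hPt x _ (hA.inter hSx) (fun hx' => hxS hx'.2),
            withDensity_apply _ (hA.inter hSx)]
        calc ∫⁻ y, F (x, y) ∂μ
            = ∫⁻ y in Prod.mk x ⁻¹' S, g (x, y) * bb (x, y) ∂μ := by
              rw [← lintegral_indicator hSx]
              refine lintegral_congr fun y => ?_
              by_cases hy : (x, y) ∈ S
              · have hy' : y ∈ Prod.mk x ⁻¹' S := hy
                rw [hF_def, Set.indicator_of_mem hy, Set.indicator_of_mem hy']
              · have hy' : y ∉ Prod.mk x ⁻¹' S := hy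
                rw [hF_def, Set.indicator_of_notMem hy, Set.indicator_of_notMem hy']
          _ = ∫⁻ y in Prod.mk x ⁻¹' S, (fun y => bb (x, y)) y * g (x, y) ∂μ := by
              refine setLIntegral_congr_fun hSx (fun y _ => ?_)
              exact mul_comm _ _
          _ = ∫⁻ y, g (x, y) ∂((μ.withDensity fun y => bb (x, y)).restrict (Prod.mk x ⁻¹' S)) := by
              rw [restrict_withDensity hSx,
                lintegral_withDensity_eq_lintegral_mul _ hbxm hgxm]
              rfl
          _ = ∫⁻ y in Prod.mk x ⁻¹' S, g (x, y) ∂(Pt x) := by rw [← hmeq]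
          _ ≤ ∫⁻ y, g (x, y) ∂(Pt x) := setLIntegral_le_lintegral _ _
      calc (K : ℝ≥0∞)⁻¹ * L
          = (K : ℝ≥0∞)⁻¹ * ∫⁻ x, ∫⁻ y, G (x, y) ∂μ ∂μ := by
            rw [hL_def, lintegral_prod _ hGm.aemeasurable]
        _ = ∫⁻ x, (K : ℝ≥0∞)⁻¹ * ∫⁻ y, G (x, y) ∂μ ∂μ :=
            lintegral_const_mul _ hGm.lintegral_prod_right' |>.symm
        _ ≤ ∫⁻ x, πd x * ∫⁻ y, F (x, y) ∂μ ∂μ := lintegral_mono_ae hmain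
        _ = ∫⁻ x, ∫⁻ y, F (x, y) ∂μ ∂π := by
            rw [hπ, lintegral_withDensity_eq_lintegral_mul _ hπd hFm.lintegral_prod_right']
            rfl
        _ ≤ ∫⁻ x, ∫⁻ y, g (x, y) ∂(Pt x) ∂π := lintegral_mono hinner
        _ = ∫⁻ p, g p ∂(π.compProd Pt) := (Measure.lintegral_compProd hgm).symm
    calc (∫⁻ p, g p ∂(π.compProd P)) ≤ L := step1
      _ = (K : ℝ≥0∞) * ((K : ℝ≥0∞)⁻¹ * L) := by
          rw [← mul_assoc, ENNReal.mul_inv_cancel hK0 hKtop, one_mul]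
      _ ≤ (K : ℝ≥0∞) * ∫⁻ p, g p ∂(π.compProd Pt) := mul_le_mul_right step2 _
  -- extend to MemLp f
  have coreae : ∀ f : X → ℝ, MemLp f 2 π →
      (∫⁻ p, ENNReal.ofReal ((f p.2 - f p.1) ^ 2) ∂(π.compProd P))
        ≤ (K : ℝ≥0∞) * ∫⁻ p, ENNReal.ofReal ((f p.2 - f p.1) ^ 2) ∂(π.compProd Pt) := by
    intro f hf
    obtain ⟨f', hsm, hae⟩ := hf.aestronglyMeasurable
    have hf'm : Measurable f' := hsm.measurable
    obtain ⟨N, hN_sub, hNm, hN0⟩ := exists_measurable_superset_of_null (ae_iff.mp hae)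
    have hNuniv : ∀ (κ : Kernel X X) [IsSFiniteKernel κ],
        (π.compProd κ) (N ×ˢ (Set.univ : Set X)) = 0 := by
      intro κ _
      rw [Measure.compProd_apply (hNm.prod MeasurableSet.univ)]
      have hz : ∀ᵐ x ∂π, (κ x) (Prod.mk x ⁻¹' (N ×ˢ (Set.univ : Set X))) = 0 := by
        filter_upwards [measure_eq_zero_iff_ae_notMem.mp hN0] with x hx
        have hpre : Prod.mk x ⁻¹' (N ×ˢ (Set.univ : Set X)) = ∅ := by
          ext y; simp [hx]
        rw [hpre]; simp
      rw [lintegral_congr_ae hz, lintegral_zero]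
    have hswap_pre : Prod.swap ⁻¹' ((Set.univ : Set X) ×ˢ N) = N ×ˢ (Set.univ : Set X) := by
      ext p; simp
    have hν2 : (π.compProd P) ((Set.univ : Set X) ×ˢ N) = 0 := by
      have h1 : (π.compProd P) ((Set.univ : Set X) ×ˢ N)
          = (π.compProd P) (N ×ˢ (Set.univ : Set X)) := by
        conv_lhs => rw [← hrev]
        rw [Measure.map_apply measurable_swap (MeasurableSet.univ.prod hNm), hswap_pre]
      rw [h1, hNuniv P]
    have hνt2 : (π.compProd Pt) ((Set.univ : Set X) ×ˢ N) = 0 := by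
      rw [Measure.compProd_apply (MeasurableSet.univ.prod hNm)]
      have hpre : ∀ x : X, Prod.mk x ⁻¹' ((Set.univ : Set X) ×ˢ N) = N := by
        intro x; ext y; simp
      have hπd0 : ∀ᵐ y ∂(μ.restrict N), πd y = 0 := by
        have hz : ∫⁻ y in N, πd y ∂μ = 0 := by
          rw [← withDensity_apply _ hNm, ← hπ]; exact hN0
        exact (lintegral_eq_zero_iff hπd).mp hz
      have hPtN : ∀ x, x ∉ N → (Pt x) N = 0 := by
        intro x hx
        rw [hPt x N hNm hx]
        have hb : Measurable fun y =>
            (if πd x * qt x y = 0 then 0 else min 1 (πd y * qt y x / (πd x * qt x y)))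
              * qt x y := hbbm.comp measurable_prodMk_left
        rw [lintegral_eq_zero_iff hb]
        filter_upwards [hπd0] with y hy
        simp [hbb_def, hy]
      have hz : ∀ᵐ x ∂π, (Pt x) (Prod.mk x ⁻¹' ((Set.univ : Set X) ×ˢ N)) = 0 := by
        filter_upwards [measure_eq_zero_iff_ae_notMem.mp hN0] with x hx
        rw [hpre x]
        exact hPtN x hx
      rw [lintegral_congr_ae hz, lintegral_zero]
    have hgg : ∀ ν : Measure (X × X), ν (N ×ˢ (Set.univ : Set X)) = 0 →
        ν ((Set.univ : Set X) ×ˢ N) = 0 →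
        (fun p : X × X => ENNReal.ofReal ((f p.2 - f p.1) ^ 2))
          =ᵐ[ν] fun p : X × X => ENNReal.ofReal ((f' p.2 - f' p.1) ^ 2) := by
      intro ν h1 h2
      have key : ∀ᵐ p ∂ν, p.1 ∉ N ∧ p.2 ∉ N := by
        rw [ae_iff]
        refine measure_mono_null ?_ (measure_union_null h1 h2)
        intro p hp
        simp only [Set.mem_setOf_eq, not_and_or, not_not] at hp
        rcases hp with hp | hp
        · exact Or.inl ⟨hp, trivial⟩
        · exact Or.inr ⟨trivial, hp⟩
      filter_upwards [key] with p hp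
      have e1 : f p.1 = f' p.1 := by
        by_contra hne; exact hp.1 (hN_sub hne)
      have e2 : f p.2 = f' p.2 := by
        by_contra hne; exact hp.2 (hN_sub hne)
      rw [e1, e2]
    rw [lintegral_congr_ae (hgg _ (hNuniv P) hν2), lintegral_congr_ae (hgg _ (hNuniv Pt) hνt2)]
    exact core f' hf'm
  -- conclude
  have hgap : (K : ℝ≥0∞)⁻¹ * gap π P ≤ gap π Pt := by
    refine le_iInf fun f => le_iInf fun hf => le_iInf fun hv => ?_
    have h1 : gap π P ≤ (∫⁻ p, ENNReal.ofReal ((f p.2 - f p.1) ^ 2) ∂(π.compProd P))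
        / (2 * ENNReal.ofReal (piVar π f)) :=
      iInf_le_of_le f (iInf_le_of_le hf (iInf_le _ hv))
    calc (K : ℝ≥0∞)⁻¹ * gap π P
        ≤ (K : ℝ≥0∞)⁻¹ * ((∫⁻ p, ENNReal.ofReal ((f p.2 - f p.1) ^ 2) ∂(π.compProd P))
            / (2 * ENNReal.ofReal (piVar π f))) := mul_le_mul_right h1 _
      _ ≤ (K : ℝ≥0∞)⁻¹ * (((K : ℝ≥0∞) * ∫⁻ p, ENNReal.ofReal ((f p.2 - f p.1) ^ 2)
            ∂(π.compProd Pt)) / (2 * ENNReal.ofReal (piVar π f))) :=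
          mul_le_mul_right (ENNReal.div_le_div_right (coreae f hf) _) _
      _ = (∫⁻ p, ENNReal.ofReal ((f p.2 - f p.1) ^ 2) ∂(π.compProd Pt))
            / (2 * ENNReal.ofReal (piVar π f)) := by
          rw [mul_div_assoc, ← mul_assoc, ENNReal.inv_mul_cancel hK0 hKtop, one_mul]
  calc gap π P = (K : ℝ≥0∞) * ((K : ℝ≥0∞)⁻¹ * gap π P) := by
        rw [← mul_assoc, ENNReal.mul_inv_cancel hK0 hKtop, one_mul]
    _ ≤ (K : ℝ≥0∞) * gap π Pt := mul_le_mul_right hgap _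
end
end

section
/- Suppose the selection function h satisfies, for every i = 1,…,K and μ^{1+K}-almost every (x, y_{1:K}), the detailed-balance-type identity h_i(x, y_{1:K}) π(x) q(x, y_{1:K}) = h_i(y_i, (x, y_{−i})) π(y_i) q(y_i, (x, y_{−i})), where (x, y_{−i}) denotes the vector y_{1:K} with its i-th coordinate replaced by x. Then the multiproposal kernel P^{(K)} built from Q and h is π-reversible. -/
open MeasureTheory ProbabilityTheory ENNReal

noncomputable section

section AuxGMH

variable {X : Type*} [MeasurableSpace X]

variable {X : Type*} [MeasurableSpace X]

lemma measurePreserving_updSwap (μ : Measure X) [SigmaFinite μ] {K : ℕ} (i : Fin K) :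
    MeasurePreserving (fun p : X × (Fin K → X) => (p.2 i, Function.update p.2 i p.1))
      (μ.prod (Measure.pi fun _ : Fin K => μ)) (μ.prod (Measure.pi fun _ : Fin K => μ)) := by
  classical
  set e : (Fin (K+1) → X) ≃ᵐ X × (Fin K → X) :=
    MeasurableEquiv.piFinSuccAbove (fun _ => X) 0 with he_def
  have he : MeasurePreserving e (Measure.pi fun _ : Fin (K+1) => μ)
      (μ.prod (Measure.pi fun _ : Fin K => μ)) :=
    measurePreserving_piFinSuccAbove (fun _ : Fin (K+1) => μ) 0
  set σ : Fin (K+1) ≃ Fin (K+1) := Equiv.swap 0 i.succ with hσ_def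
  set c : (Fin (K+1) → X) ≃ᵐ (Fin (K+1) → X) :=
    MeasurableEquiv.piCongrLeft (fun _ => X) σ with hc_def
  have hc : MeasurePreserving c (Measure.pi fun _ : Fin (K+1) => μ)
      (Measure.pi fun _ : Fin (K+1) => μ) :=
    measurePreserving_piCongrLeft (fun _ : Fin (K+1) => μ) σ
  have hcz : ∀ (z : Fin (K+1) → X) (b : Fin (K+1)), c z b = z (σ b) := by
    intro z b
    have h2 : c z (σ (σ b)) = z (σ b) := Equiv.piCongrLeft_apply_apply (fun _ => X) σ z (σ b)
    simpa [hσ_def, Equiv.swap_apply_self] using h2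
  have hfun : (fun p : X × (Fin K → X) => (p.2 i, Function.update p.2 i p.1))
      = e ∘ c ∘ e.symm := by
    funext p
    obtain ⟨x, y⟩ := p
    have hsymm : (e.symm (x, y) : Fin (K+1) → X) = Fin.cons x y := by
      simp [he_def, MeasurableEquiv.piFinSuccAbove, Fin.insertNthEquiv]
    simp only [Function.comp_apply, hsymm]
    have h0 : ∀ z : Fin (K+1) → X, e z = (z 0, fun j => z j.succ) := by
      intro z
      simp [he_def, MeasurableEquiv.piFinSuccAbove, Fin.insertNthEquiv]
      rfl
    rw [h0]
    refine Prod.ext ?_ ?_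
    · simp [hcz, hσ_def, Equiv.swap_apply_left, Fin.cons_succ]
    · funext j
      simp only [hcz]
      by_cases hj : j = i
      · subst hj
        simp [hσ_def, Equiv.swap_apply_right, Fin.cons_zero, Function.update_self]
      · have : σ j.succ = j.succ := by
          rw [hσ_def]
          exact Equiv.swap_apply_of_ne_of_ne (Fin.succ_ne_zero j) (by simpa using hj)
        simp [this, Fin.cons_succ, Function.update_of_ne hj]
  rw [hfun]
  exact he.comp (hc.comp he.symm)

lemma eval_offdiag (μ : Measure X) [SigmaFinite μ] (π : Measure X)
    (πd : X → ℝ≥0∞) (hπd : Measurable πd) (hπ : π = μ.withDensity πd)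
    {K : ℕ} (q : X → (Fin K → X) → ℝ≥0∞)
    (hq : Measurable fun p : X × (Fin K → X) => q p.1 p.2)
    (Q : Kernel X (Fin K → X))
    (hQ : ∀ x, Q x = (Measure.pi fun _ : Fin K => μ).withDensity (q x))
    (h : X → (Fin K → X) → Fin K → ℝ≥0∞)
    (hmeas : ∀ i : Fin K, Measurable fun p : X × (Fin K → X) => h p.1 p.2 i)
    (P : Kernel X X) (hP : IsMultiproposal K Q h P)
    {S T : Set X} (hS : MeasurableSet S) (hT : MeasurableSet T) (hST : Disjoint S T) :
    ∫⁻ x in S, P x T ∂π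
      = ∑ i : Fin K, ∫⁻ p : X × (Fin K → X),
          S.indicator 1 p.1 * T.indicator 1 (p.2 i)
            * (h p.1 p.2 i * (πd p.1 * q p.1 p.2))
          ∂(μ.prod (Measure.pi fun _ : Fin K => μ)) := by
  classical
  set ν : Measure (Fin K → X) := Measure.pi fun _ : Fin K => μ with hν_def
  have hΦ : ∀ i : Fin K, Measurable fun p : X × (Fin K → X) =>
      S.indicator 1 p.1 * T.indicator 1 (p.2 i) * (h p.1 p.2 i * (πd p.1 * q p.1 p.2)) :=
    fun i => (((measurable_one.indicator hS).comp measurable_fst).mul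
      ((measurable_one.indicator hT).comp ((measurable_pi_apply i).comp measurable_snd))).mul
      ((hmeas i).mul ((hπd.comp measurable_fst).mul hq))
  -- step 1: pointwise identity on S
  have step1 : ∫⁻ x in S, P x T ∂π
      = ∫⁻ x in S, ∑ i : Fin K,
          ∫⁻ y, q x y * (T.indicator 1 (y i) * h x y i) ∂ν ∂π := by
    refine setLIntegral_congr_fun hS (fun x hx => ?_)
    rw [hP x T hT (fun hxT => hST.ne_of_mem hx hxT rfl)]
    refine Finset.sum_congr rfl fun i _ => ?_
    have h1 : ∫⁻ y, T.indicator (fun _ => h x y i) (y i) ∂(Q x)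
        = ∫⁻ y, T.indicator 1 (y i) * h x y i ∂(Q x) :=
      lintegral_congr fun y => by by_cases hy : y i ∈ T <;> simp [hy]
    have hm1 : Measurable (q x) := hq.comp measurable_prodMk_left
    have hm2 : Measurable fun y : Fin K → X => T.indicator 1 (y i) * h x y i :=
      ((measurable_one.indicator hT).comp (measurable_pi_apply i)).mul
        ((hmeas i).comp measurable_prodMk_left)
    rw [h1, hQ x, lintegral_withDensity_eq_lintegral_mul ν hm1 hm2]
    exact lintegral_congr fun y => by simp only [Pi.mul_apply]
  rw [step1]
  have hg : ∀ i : Fin K, Measurable fun x =>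
      ∫⁻ y, q x y * (T.indicator 1 (y i) * h x y i) ∂ν := by
    intro i
    apply Measurable.lintegral_prod_right
      (f := fun x y => q x y * (T.indicator 1 (y i) * h x y i))
    exact hq.mul (((measurable_one.indicator hT).comp
      ((measurable_pi_apply i).comp measurable_snd)).mul (hmeas i))
  have hgsum : Measurable fun x => ∑ i : Fin K,
      ∫⁻ y, q x y * (T.indicator 1 (y i) * h x y i) ∂ν :=
    Finset.measurable_sum _ fun i _ => hg i
  rw [hπ, restrict_withDensity hS, lintegral_withDensity_eq_lintegral_mul _ hπd hgsum]
  rw [← lintegral_indicator hS]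
  have step3 : ∀ x, S.indicator
        ((πd * fun x => ∑ i : Fin K,
          ∫⁻ y, q x y * (T.indicator 1 (y i) * h x y i) ∂ν)) x
      = ∑ i : Fin K, ∫⁻ y, S.indicator 1 x * T.indicator 1 (y i)
          * (h x y i * (πd x * q x y)) ∂ν := by
    intro x
    by_cases hx : x ∈ S
    · rw [Set.indicator_of_mem hx]
      simp only [Pi.mul_apply]
      rw [Finset.mul_sum]
      refine Finset.sum_congr rfl fun i _ => ?_
      have hm : Measurable fun y : Fin K → X => q x y * (T.indicator 1 (y i) * h x y i) :=
        (hq.comp measurable_prodMk_left).mul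
          (((measurable_one.indicator hT).comp (measurable_pi_apply i)).mul
            ((hmeas i).comp measurable_prodMk_left))
      rw [← lintegral_const_mul _ hm]
      refine lintegral_congr fun y => ?_
      simp only [Set.indicator_of_mem hx, Pi.one_apply]
      ring
    · rw [Set.indicator_of_notMem hx]
      symm
      refine Finset.sum_eq_zero fun i _ => ?_
      simp only [Set.indicator_of_notMem hx, zero_mul, lintegral_zero]
  rw [lintegral_congr step3]
  rw [lintegral_finset_sum _ (fun i _ => ?_)]
  · refine Finset.sum_congr rfl fun i _ => ?_
    exact (lintegral_prod _ (hΦ i).aemeasurable).symm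
  · apply Measurable.lintegral_prod_right
      (f := fun x y => S.indicator 1 x * T.indicator 1 (y i) * (h x y i * (πd x * q x y)))
    exact hΦ i

end AuxGMH

/-- if the selection function `h` satisfies, for every `i` and
`μ^{1+K}`-almost every `(x, y_{1:K})`, the detailed-balance-type identity
`h_i(x, y_{1:K}) π(x) q(x, y_{1:K}) = h_i(y_i, (x, y_{-i})) π(y_i) q(y_i, (x, y_{-i}))`
(`(x, y_{-i})` being `y_{1:K}` with its `i`-th coordinate replaced by `x`), then the
multiproposal kernel `P^{(K)}` built from `Q` and `h` is `π`-reversible. -/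
theorem gmh_reversible
    {X : Type*} [MeasurableSpace X] (μ : Measure X) [SigmaFinite μ]
    (π : Measure X) [IsProbabilityMeasure π]
    (πd : X → ℝ≥0∞) (hπd : Measurable πd) (hπ : π = μ.withDensity πd)
    (K : ℕ) (hK : 1 ≤ K)
    (q : X → (Fin K → X) → ℝ≥0∞)
    (hq : Measurable fun p : X × (Fin K → X) => q p.1 p.2)
    (Q : Kernel X (Fin K → X)) [IsMarkovKernel Q]
    (hQ : ∀ x, Q x = (Measure.pi fun _ : Fin K => μ).withDensity (q x))
    (h : X → (Fin K → X) → Fin K → ℝ≥0∞)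
    (hmeas : ∀ i : Fin K, Measurable fun p : X × (Fin K → X) => h p.1 p.2 i)
    (hsum : ∀ (x : X) (y : Fin K → X), ∑ i : Fin K, h x y i ≤ 1)
    (hdb : ∀ i : Fin K,
      ∀ᵐ p : X × (Fin K → X) ∂(μ.prod (Measure.pi fun _ : Fin K => μ)),
        h p.1 p.2 i * (πd p.1 * q p.1 p.2)
          = h (p.2 i) (Function.update p.2 i p.1) i
            * (πd (p.2 i) * q (p.2 i) (Function.update p.2 i p.1)))
    (P : Kernel X X) [IsMarkovKernel P]
    (hP : IsMultiproposal K Q h P) :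
    Reversible π P := by
  classical
  set ν : Measure (Fin K → X) := Measure.pi fun _ : Fin K => μ with hν_def
  -- the key symmetry claim for disjoint measurable sets
  have claimC : ∀ S T : Set X, MeasurableSet S → MeasurableSet T → Disjoint S T →
      ∫⁻ x in S, P x T ∂π = ∫⁻ x in T, P x S ∂π := by
    intro S T hS hT hST
    rw [eval_offdiag μ π πd hπd hπ q hq Q hQ h hmeas P hP hS hT hST,
        eval_offdiag μ π πd hπd hπ q hq Q hQ h hmeas P hP hT hS hST.symm]
    refine Finset.sum_congr rfl fun i _ => ?_
    have hΨ : Measurable fun p : X × (Fin K → X) =>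
        T.indicator 1 p.1 * S.indicator 1 (p.2 i) * (h p.1 p.2 i * (πd p.1 * q p.1 p.2)) :=
      (((measurable_one.indicator hT).comp measurable_fst).mul
        ((measurable_one.indicator hS).comp ((measurable_pi_apply i).comp measurable_snd))).mul
        ((hmeas i).mul ((hπd.comp measurable_fst).mul hq))
    have hMP := measurePreserving_updSwap μ i
    have key : ∫⁻ p : X × (Fin K → X),
        S.indicator 1 p.1 * T.indicator 1 (p.2 i) * (h p.1 p.2 i * (πd p.1 * q p.1 p.2))
          ∂(μ.prod ν)
        = ∫⁻ p : X × (Fin K → X),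
            (fun r : X × (Fin K → X) => T.indicator 1 r.1 * S.indicator 1 (r.2 i)
              * (h r.1 r.2 i * (πd r.1 * q r.1 r.2)))
            ((fun p : X × (Fin K → X) => (p.2 i, Function.update p.2 i p.1)) p)
          ∂(μ.prod ν) := by
      refine lintegral_congr_ae ?_
      filter_upwards [hdb i] with p hp
      simp only [Function.update_self]
      rw [← hp]
      ring
    rw [key, hMP.lintegral_comp hΨ]
  -- reduce to rectangles
  rw [Reversible]
  have hswap : Measurable (Prod.swap : X × X → X × X) := measurable_swap
  have hprob : IsProbabilityMeasure (π.compProd P) := by infer_instance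
  refine ext_of_generate_finite _ generateFrom_prod.symm isPiSystem_prod ?_ ?_
  · rintro s ⟨A, hA, B, hB, rfl⟩
    simp only [Set.mem_setOf_eq] at hA hB
    rw [Measure.map_apply hswap ((hA.prod hB)), Set.preimage_swap_prod,
        Measure.compProd_apply_prod hB hA, Measure.compProd_apply_prod hA hB]
    -- show ∫⁻ x in B, P x A ∂π = ∫⁻ x in A, P x B ∂π
    have hsplitA : ∀ x, P x A = P x (A \ B) + P x (A ∩ B) := by
      intro x
      rw [← measure_union (Set.disjoint_of_subset_right Set.inter_subset_right
        disjoint_sdiff_self_left) (hA.inter hB)]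
      congr 1
      rw [Set.diff_union_inter]
    have hsplitB : ∀ x, P x B = P x (B \ A) + P x (A ∩ B) := by
      intro x
      rw [← measure_union (Set.disjoint_of_subset_right Set.inter_subset_left
        disjoint_sdiff_self_left) (hA.inter hB)]
      congr 1
      rw [Set.inter_comm, Set.diff_union_inter]
    have hdecompA : ∀ (f : X → ℝ≥0∞), ∫⁻ x in A, f x ∂π
        = ∫⁻ x in A \ B, f x ∂π + ∫⁻ x in A ∩ B, f x ∂π := by
      intro f
      rw [← lintegral_union (hA.inter hB) (Set.disjoint_of_subset_right
        Set.inter_subset_right disjoint_sdiff_self_left), Set.diff_union_inter]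
    have hdecompB : ∀ (f : X → ℝ≥0∞), ∫⁻ x in B, f x ∂π
        = ∫⁻ x in B \ A, f x ∂π + ∫⁻ x in A ∩ B, f x ∂π := by
      intro f
      rw [← lintegral_union (hA.inter hB) (Set.disjoint_of_subset_right
        Set.inter_subset_left disjoint_sdiff_self_left), Set.inter_comm, Set.diff_union_inter]
    have mBA : Measurable fun x => P x (B \ A) := Kernel.measurable_coe P (hB.diff hA)
    have mAB : Measurable fun x => P x (A \ B) := Kernel.measurable_coe P (hA.diff hB)
    have mI : Measurable fun x => P x (A ∩ B) := Kernel.measurable_coe P (hA.inter hB)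
    calc ∫⁻ x in B, P x A ∂π
        = ∫⁻ x in B, (P x (A \ B) + P x (A ∩ B)) ∂π := by
          exact lintegral_congr fun x => by rw [hsplitA x]
      _ = ∫⁻ x in B, P x (A \ B) ∂π + ∫⁻ x in B, P x (A ∩ B) ∂π :=
          lintegral_add_left mAB _
      _ = (∫⁻ x in B \ A, P x (A \ B) ∂π + ∫⁻ x in A ∩ B, P x (A \ B) ∂π)
          + (∫⁻ x in B \ A, P x (A ∩ B) ∂π + ∫⁻ x in A ∩ B, P x (A ∩ B) ∂π) := by
          rw [hdecompB, hdecompB]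
      _ = (∫⁻ x in A \ B, P x (B \ A) ∂π + ∫⁻ x in A \ B, P x (A ∩ B) ∂π)
          + (∫⁻ x in A ∩ B, P x (B \ A) ∂π + ∫⁻ x in A ∩ B, P x (A ∩ B) ∂π) := by
          rw [claimC (B \ A) (A \ B) (hB.diff hA) (hA.diff hB)
            (disjoint_sdiff_sdiff)]
          rw [claimC (A ∩ B) (A \ B) (hA.inter hB) (hA.diff hB)
            (Set.disjoint_of_subset_left Set.inter_subset_right disjoint_sdiff_self_right)]
          rw [claimC (B \ A) (A ∩ B) (hB.diff hA) (hA.inter hB)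
            (Set.disjoint_of_subset_right Set.inter_subset_left disjoint_sdiff_self_left)]
      _ = ∫⁻ x in A \ B, P x B ∂π + ∫⁻ x in A ∩ B, P x B ∂π := by
          rw [← lintegral_add_left mBA,
              ← lintegral_add_left mBA]
          rw [lintegral_congr fun x => (hsplitB x).symm,
              lintegral_congr fun x => (hsplitB x).symm]
      _ = ∫⁻ x in A, P x B ∂π := (hdecompA _).symm
  · rw [Measure.map_apply hswap MeasurableSet.univ]
    simp
end
end
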